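/- Let G be a d-dimensional weakly dual systolic graph, U a set of s > 1 vertices. Then φ_G(U) ≥ d − 8(1 + log₂ log₂ s). -/

import Mathlib

/-!
We model a finite `d`-regular graph with a proper edge `d`-coloring
(each vertex meets exactly one edge of each color) by giving, for every
color `i : Fin d`, a fixed-point-free involution `m i` on the vertices:
the color-`i` edges are the pairs `{v, m i v}`.
-/
structure EdgeColoredGraph (V : Type) (d : ℕ) where
  /-- `m i v` is the other endpoint of the unique color-`i` edge at `v`. -/
  m : Fin d → V → V
  invol : ∀ i v, m i (m i v) = v
  ne : ∀ i v, m i v ≠ v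

namespace EdgeColoredGraph

variable {V : Type} {d : ℕ}

/-- `G.ReachIn S u v` : `v` is reachable from `u` using only edges whose
color lies in `S`. -/
def ReachIn (G : EdgeColoredGraph V d) (S : Set (Fin d)) : V → V → Prop :=
  Relation.ReflTransGen (fun a b => ∃ i ∈ S, G.m i a = b)

/-- Color independence: for every color `i`, contracting all edges of
color `≠ i` produces no self-loop, i.e. no color-`i` edge has its two
endpoints joined by a path avoiding color `i`. -/
def IsPseudoCube (G : EdgeColoredGraph V d) : Prop :=
  ∀ (i : Fin d) (v : V), ¬ G.ReachIn {j | j ≠ i} v (G.m i v)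

/-- `∂(U)`: the number of edges with exactly one endpoint in `U`
(each such edge is counted once, at its endpoint inside `U`). -/
def boundary [Fintype V] [DecidableEq V] (G : EdgeColoredGraph V d) (U : Finset V) : ℕ :=
  ∑ i : Fin d, (U.filter fun v => G.m i v ∉ U).card

end EdgeColoredGraph

namespace EdgeColoredGraph

variable {V : Type} {d : ℕ}

/-- The connected component of `v` in the graph obtained from `G` by deleting
all edges of the top color `d`. -/
def comp (G : EdgeColoredGraph V (d + 1)) (v : V) : Type :=
  {u : V // G.ReachIn {i | i ≠ Fin.last d} v u}

/-- The (d-dimensional, edge `d`-colored) graph induced by `G` on the connected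
component of `v` after deleting all edges of the top color. -/
def restrict (G : EdgeColoredGraph V (d + 1)) (v : V) : EdgeColoredGraph (G.comp v) d where
  m i u := ⟨G.m i.castSucc u.1,
    u.2.tail ⟨i.castSucc, (Fin.castSucc_lt_last i).ne, rfl⟩⟩
  invol i u := Subtype.ext (G.invol i.castSucc u.1)
  ne i u h := G.ne i.castSucc u.1 (congrArg Subtype.val h)

/-- A weak pseudo-cube: `d`-regular, properly edge `d`-colored, contracting
all edges of color `≠ d` gives no self-loop, and every connected component of
the graph with the color-`d` edges deleted is a `(d-1)`-dimensional weak
pseudo-cube.  (For `d = 1` the conditions amount to a perfect matching, which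
holds automatically in this encoding.) -/
def IsWeakPseudoCube : ∀ {d : ℕ} {V : Type}, EdgeColoredGraph V d → Prop
  | 0, _, _ => True
  | _ + 1, _, G =>
      (∀ v, ¬ G.ReachIn {i | i ≠ Fin.last _} v (G.m (Fin.last _) v)) ∧
      ∀ v, IsWeakPseudoCube (G.restrict v)

/-- A weakly dual systolic graph: a weak pseudo-cube such that the multigraph
obtained by contracting all edges of color `≠ d` is simple (between any two
connected components of the color-`d`-deleted graph there is at most one
color-`d` edge), and every connected component of the color-`d`-deleted graph
is weakly dual systolic of dimension `d - 1`. -/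
def IsWeaklyDualSystolic : ∀ {d : ℕ} {V : Type}, EdgeColoredGraph V d → Prop
  | 0, _, _ => True
  | _ + 1, _, G =>
      IsWeakPseudoCube G ∧
      (∀ a b, G.ReachIn {i | i ≠ Fin.last _} a b →
        G.ReachIn {i | i ≠ Fin.last _} (G.m (Fin.last _) a) (G.m (Fin.last _) b) → a = b) ∧
      ∀ v, IsWeaklyDualSystolic (G.restrict v)

end EdgeColoredGraph


/-!
Induction on the dimension, for the bound `∂U ≥ |U| (d - δ(|U|))` with
`δ(s) = 8 (1 + log₂ log₂ s)` for `s ≥ 2` and `δ(s) = 0` for `s ≤ 1`.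
Deleting the top colour splits `U` into pieces `U_q`, one per component `q` of the lower
`d`-dimensional graph; the lower colours contribute the boundaries of the pieces inside their
components, bounded by induction, and a piece of size `t` beats the target `t (d - δ(|U|))` by
`t (δ(|U|) - δ(t))`. The top colour contributes `|U|`, minus one for every vertex whose
top-colour neighbour lies in `U`. A small piece (`t² ≤ |U|`) gains at least `8t`, more than
twice its own such vertices. There are at most `k ≤ √|U|` large pieces, and since contracting
the lower colours leaves a simple graph without loops, at most `k (k - 1)` of these vertices
join two large pieces; the others are charged to a small piece. Finally every large piece but
possibly one has size at most `|U| / 2`, and then its gain is at least `√|U| ≥ k`.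
-/

open Real Finset

theorem one_le_logb_two {x : ℝ} (hx : 2 ≤ x) : 1 ≤ logb 2 x := by
  rw [le_logb_iff_rpow_le one_lt_two (by linarith)]
  simpa using hx

theorem logb_two_logb_two_nonneg {x : ℝ} (hx : 2 ≤ x) : 0 ≤ logb 2 (logb 2 x) :=
  logb_nonneg one_lt_two (one_le_logb_two hx)

theorem logb_two_logb_two_le {x y : ℝ} (hx : 2 ≤ x) (hxy : x ≤ y) :
    logb 2 (logb 2 x) ≤ logb 2 (logb 2 y) :=
  logb_le_logb_of_le one_lt_two (by linarith [one_le_logb_two hx])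
    (logb_le_logb_of_le one_lt_two (by linarith) hxy)

theorem sub_div_le_logb_two_sub {x y : ℝ} (hx : 0 < x) (hxy : x ≤ y) :
    (y - x) / y ≤ logb 2 y - logb 2 x := by
  have hy : 0 < y := hx.trans_le hxy
  have h1 : (y - x) / y ≤ log y - log x := by
    have := one_sub_inv_le_log_of_pos (div_pos hy hx)
    rw [inv_div, log_div hy.ne' hx.ne'] at this
    rwa [sub_div, div_self hy.ne']
  have h2 : 0 ≤ log y - log x := sub_nonneg.2 (log_le_log hx hxy)
  have h3 : log y - log x ≤ (log y - log x) / log 2 := by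
    rw [le_div_iff₀ (log_pos one_lt_two)]
    nlinarith [log_two_lt_d9]
  rw [logb, logb, ← sub_div]
  linarith

theorem one_le_logb_two_logb_two_sub_of_sq_le {x y : ℝ} (hx : 2 ≤ x) (h : x ^ 2 ≤ y) :
    1 ≤ logb 2 (logb 2 y) - logb 2 (logb 2 x) := by
  have hlx := one_le_logb_two hx
  have h2 : 2 * logb 2 x ≤ logb 2 y := by
    have := logb_le_logb_of_le one_lt_two (by positivity) h
    rwa [logb_pow, Nat.cast_ofNat] at this
  have h3 : logb 2 (2 * logb 2 x) = 1 + logb 2 (logb 2 x) := by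
    rw [logb_mul two_ne_zero (by linarith), logb_self_eq_one one_lt_two]
  linarith [logb_le_logb_of_le one_lt_two (by linarith) h2]

theorem logb_two_le_eight_mul_rpow {x : ℝ} (hx : 0 ≤ x) : logb 2 x ≤ 8 * x ^ (1 / 4 : ℝ) := by
  have h := log_le_rpow_div hx (by norm_num : (0 : ℝ) < 1 / 4)
  have hr : 0 ≤ x ^ (1 / 4 : ℝ) := rpow_nonneg hx _
  rw [logb, div_le_iff₀ (log_pos one_lt_two)]
  nlinarith [log_two_gt_d9]

theorem sqrt_le_mul_logb_two_logb_two_sub {a n : ℝ} (ha : 2 ≤ a) (hna : √n ≤ a) (han : 2 * a ≤ n) :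
    √n ≤ 8 * a * (logb 2 (logb 2 n) - logb 2 (logb 2 a)) := by
  have hn : 0 < n := by linarith
  have hla := one_le_logb_two ha
  have hla' : logb 2 a ≤ logb 2 n - 1 := by
    have := logb_le_logb_of_le one_lt_two (by linarith) (show a ≤ n / 2 by linarith)
    rwa [logb_div hn.ne' two_ne_zero, logb_self_eq_one one_lt_two] at this
  have hgap := sub_div_le_logb_two_sub (by linarith) (hla'.trans (sub_le_self _ zero_le_one))
  set ℓ := logb 2 n
  set ℓa := logb 2 a
  have hℓ : 0 < ℓ := by linarith
  suffices h : √n * ℓ ≤ 8 * a * (ℓ - ℓa) by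
    calc √n = √n * ℓ / ℓ := by field_simp
      _ ≤ 8 * a * (ℓ - ℓa) / ℓ := by gcongr
      _ = 8 * a * ((ℓ - ℓa) / ℓ) := by ring
      _ ≤ _ := by gcongr
  have hsq : √n = n ^ (1 / 2 : ℝ) := sqrt_eq_rpow n
  -- Either `log₂ a ≤ ¾ log₂ n`, or `a ≥ n ^ ¾` absorbs the factor `log₂ n ≤ 8 n ^ ¼`.
  rcases le_total a (n ^ (3 / 4 : ℝ)) with h34 | h34
  · have : ℓa ≤ 3 / 4 * ℓ := by
      have := logb_le_logb_of_le one_lt_two (by linarith) h34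
      rwa [logb_rpow_eq_mul_logb_of_pos hn] at this
    nlinarith [sqrt_nonneg n]
  · have hsplit : n ^ (3 / 4 : ℝ) = n ^ (1 / 2 : ℝ) * n ^ (1 / 4 : ℝ) := by
      rw [← rpow_add hn]; norm_num
    have hℓ8 := logb_two_le_eight_mul_rpow hn.le
    have : √n * ℓ ≤ 8 * n ^ (3 / 4 : ℝ) := by
      rw [hsplit, hsq]; nlinarith [rpow_nonneg hn.le (1 / 2 : ℝ)]
    nlinarith

/-- The `δ` above; it vanishes at `s ≤ 1` because a singleton has boundary exactly `d`. -/
noncomputable def isoDeficit (s : ℕ) : ℝ :=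
  if s ≤ 1 then 0 else 8 * (1 + logb 2 (logb 2 s))

theorem isoDeficit_of_two_le {s : ℕ} (hs : 2 ≤ s) :
    isoDeficit s = 8 * (1 + logb 2 (logb 2 s)) :=
  if_neg (by omega)

theorem isoDeficit_nonneg (s : ℕ) : 0 ≤ isoDeficit s := by
  unfold isoDeficit
  split_ifs with hs
  · exact le_rfl
  · have := logb_two_logb_two_nonneg (show (2 : ℝ) ≤ s by exact_mod_cast not_le.1 hs)
    positivity

theorem eight_le_isoDeficit_sub_of_sq_le {t n : ℕ} (ht : 1 ≤ t) (hn : 2 ≤ n) (h : t ^ 2 ≤ n) :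
    8 ≤ isoDeficit n - isoDeficit t := by
  have hn' : (2 : ℝ) ≤ n := by exact_mod_cast hn
  rw [isoDeficit_of_two_le hn]
  rcases ht.eq_or_lt with rfl | ht
  · simp [isoDeficit, logb_two_logb_two_nonneg hn']
  · have ht' : (2 : ℝ) ≤ t := by exact_mod_cast ht
    rw [isoDeficit_of_two_le ht]
    linarith [one_le_logb_two_logb_two_sub_of_sq_le ht' (by exact_mod_cast h : (t : ℝ) ^ 2 ≤ n)]

theorem sqrt_le_mul_isoDeficit_sub {t n : ℕ} (ht : 2 ≤ t) (hnt : √n ≤ t) (htn : 2 * t ≤ n) :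
    √n ≤ t * (isoDeficit n - isoDeficit t) := by
  rw [isoDeficit_of_two_le (by omega), isoDeficit_of_two_le ht]
  have := sqrt_le_mul_logb_two_logb_two_sub (show (2 : ℝ) ≤ t by exact_mod_cast ht) hnt
    (by exact_mod_cast htn)
  linarith

theorem card_filter_lt_two_mul_le_one {ι : Type*} [DecidableEq ι] (C : Finset ι) (s : ι → ℕ) :
    #{q ∈ C | ∑ p ∈ C, s p < 2 * s q} ≤ 1 := by
  refine card_le_one.2 fun p hp q hq => by_contra fun hpq => ?_
  rw [mem_filter] at hp hq
  have : s p + s q ≤ ∑ r ∈ C, s r := by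
    rw [← sum_pair hpq]
    exact sum_le_sum_of_subset (by simp [insert_subset_iff, hp.1, hq.1])
  omega

theorem card_filter_lt_sq_le_sqrt {ι : Type*} (C : Finset ι) (s : ι → ℕ) :
    (#{q ∈ C | ∑ p ∈ C, s p < s q ^ 2} : ℝ) ≤ √(∑ p ∈ C, s p : ℕ) := by
  set n := ∑ p ∈ C, s p
  set big := C.filter (n < s · ^ 2)
  have hbig : ∀ q ∈ big, 1 ≤ s q ∧ √n < s q := fun q hq => by
    have h := (mem_filter.1 hq).2
    have hq1 : 1 ≤ s q := Nat.pos_of_ne_zero (by rintro h0; simp [h0] at h)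
    refine ⟨hq1, (sqrt_lt' (by exact_mod_cast hq1)).2 (by exact_mod_cast h)⟩
  have hsum : ∑ q ∈ big, (s q : ℝ) ≤ n := by
    exact_mod_cast sum_le_sum_of_subset (filter_subset _ C)
  have h1 : (#big : ℝ) ≤ n := by
    refine le_trans ?_ hsum
    simpa using card_nsmul_le_sum big (fun q => (s q : ℝ)) 1
      fun q hq => by exact_mod_cast (hbig q hq).1
  have h2 : #big * √n ≤ n := by
    refine le_trans ?_ hsum
    simpa using card_nsmul_le_sum big (fun q => (s q : ℝ)) (√n) fun q hq => (hbig q hq).2.le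
  have hn : (n : ℝ) = √n * √n := (mul_self_sqrt (Nat.cast_nonneg n)).symm
  nlinarith [sqrt_nonneg n]

theorem isoDeficit_mono : Monotone isoDeficit := by
  intro t n htn
  by_cases ht : t ≤ 1
  · rw [isoDeficit, if_pos ht]
    exact isoDeficit_nonneg n
  · rw [isoDeficit_of_two_le (by omega), isoDeficit_of_two_le (by omega)]
    have := logb_two_logb_two_le (show (2 : ℝ) ≤ t by exact_mod_cast not_le.1 ht)
      (show (t : ℝ) ≤ n by exact_mod_cast htn)
    linarith

theorem card_offDiag_le_sum_mul_isoDeficit_sub {ι : Type*} [DecidableEq ι] (C : Finset ι)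
    (s : ι → ℕ) {n : ℕ} (hsum : ∑ q ∈ C, s q = n) (hn : 2 ≤ n) :
    (#{q ∈ C | n < s q ^ 2}.offDiag : ℝ)
      ≤ ∑ q ∈ C with n < s q ^ 2, s q * (isoDeficit n - isoDeficit (s q)) := by
  set big := C.filter (fun q => n < s q ^ 2)
  set half := big.filter (fun q => 2 * s q ≤ n)
  have hhalf : #big ≤ #half + 1 := by
    have hrest : #(big.filter (fun q => ¬ 2 * s q ≤ n)) ≤ 1 := by
      refine le_trans (card_le_card fun q hq => ?_) (card_filter_lt_two_mul_le_one C s)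
      simp only [big, mem_filter, hsum] at hq ⊢
      exact ⟨hq.1.1, by omega⟩
    have : #half + #(big.filter (fun q => ¬ 2 * s q ≤ n)) = #big :=
      card_filter_add_card_filter_not _
    omega
  have hoff : #big.offDiag ≤ #half * #big := by
    rw [offDiag_card, ← Nat.sub_one_mul]
    exact Nat.mul_le_mul_right _ (by omega)
  have hk : (#big : ℝ) ≤ √n := by
    simpa only [big, hsum] using card_filter_lt_sq_le_sqrt C s
  have hgain : ∀ q ∈ big, 0 ≤ (s q : ℝ) * (isoDeficit n - isoDeficit (s q)) := fun q hq => by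
    have := isoDeficit_mono (hsum ▸ single_le_sum (fun _ _ => Nat.zero_le _) (mem_filter.1 hq).1)
    exact mul_nonneg (Nat.cast_nonneg _) (sub_nonneg.2 this)
  calc (#big.offDiag : ℝ) ≤ #half * #big := by exact_mod_cast hoff
    _ ≤ ∑ q ∈ half, s q * (isoDeficit n - isoDeficit (s q)) := by
      simpa using card_nsmul_le_sum half _ (#big : ℝ) fun q hq => by
        simp only [half, big, mem_filter] at hq
        have hq2 : 2 ≤ s q := by nlinarith
        refine hk.trans (sqrt_le_mul_isoDeficit_sub hq2 ?_ hq.2)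
        exact (sqrt_le_left (Nat.cast_nonneg _)).2 (by exact_mod_cast hq.1.2.le)
    _ ≤ ∑ q ∈ big, s q * (isoDeficit n - isoDeficit (s q)) :=
      sum_le_sum_of_subset_of_nonneg (filter_subset _ _) fun q hq _ => hgain q hq

theorem isoDeficit_induction_step {ι : Type*} [DecidableEq ι] (C : Finset ι) (s m b : ι → ℕ)
    {d n : ℕ} (hsum : ∑ q ∈ C, s q = n) (hn : 2 ≤ n) (hs : ∀ q ∈ C, 1 ≤ s q)
    (hm : ∀ q ∈ C, m q ≤ s q) (hb : ∀ q ∈ C, s q * (d - isoDeficit (s q)) ≤ (b q : ℝ))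
    (hmatch : ∑ q ∈ C with n < s q ^ 2, m q
      ≤ #{q ∈ C | n < s q ^ 2}.offDiag + ∑ q ∈ C with ¬ n < s q ^ 2, m q) :
    n * (d - isoDeficit n) ≤ ∑ q ∈ C, (b q : ℝ) - ∑ q ∈ C, (m q : ℝ) := by
  set gain : ι → ℝ := fun q => s q * (isoDeficit n - isoDeficit (s q))
  have hsmall : ∀ q ∈ C.filter (fun q => ¬ n < s q ^ 2), 2 * (m q : ℝ) ≤ gain q := fun q hq => by
    rw [mem_filter, not_lt] at hq
    have h8 := eight_le_isoDeficit_sub_of_sq_le (hs q hq.1) hn hq.2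
    have hmq : (m q : ℝ) ≤ s q := by exact_mod_cast hm q hq.1
    have hsq : (0 : ℝ) ≤ s q := Nat.cast_nonneg _
    simp only [gain]
    nlinarith
  have hbsum : n * (d - isoDeficit n) + ∑ q ∈ C, gain q ≤ ∑ q ∈ C, (b q : ℝ) := by
    have hn' : (n : ℝ) = ∑ q ∈ C, (s q : ℝ) := by exact_mod_cast hsum.symm
    rw [hn', sum_mul, ← sum_add_distrib]
    exact sum_le_sum fun q hq => by simp only [gain]; linarith [hb q hq]
  have hmatch' : ∑ q ∈ C with n < s q ^ 2, (m q : ℝ)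
      ≤ #{q ∈ C | n < s q ^ 2}.offDiag + ∑ q ∈ C with ¬ n < s q ^ 2, (m q : ℝ) := by
    exact_mod_cast hmatch
  have hbig : (#{q ∈ C | n < s q ^ 2}.offDiag : ℝ) ≤ ∑ q ∈ C with n < s q ^ 2, gain q :=
    card_offDiag_le_sum_mul_isoDeficit_sub C s hsum hn
  have hsmall_sum := sum_le_sum hsmall
  rw [← mul_sum] at hsmall_sum
  rw [← sum_filter_add_sum_filter_not C (fun q => n < s q ^ 2) gain] at hbsum
  rw [← sum_filter_add_sum_filter_not C (fun q => n < s q ^ 2) (fun q => (m q : ℝ))]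
  linarith

theorem Finset.card_filter_eq_sum_card_filter_fiber {α β : Type*} [DecidableEq β] {U : Finset α}
    {t : Finset β} {f : α → β} {p : α → Prop} [DecidablePred p] (h : ∀ a ∈ U, p a → f a ∈ t) :
    #{a ∈ U | p a} = ∑ b ∈ t, #{a ∈ U | p a ∧ f a = b} := by
  rw [card_eq_sum_card_fiberwise (f := f) fun a ha => h a (mem_filter.1 ha).1 (mem_filter.1 ha).2]
  simp only [filter_filter]

namespace EdgeColoredGraph

variable {V : Type} {d : ℕ}

theorem reachIn_symm (G : EdgeColoredGraph V d) (S : Set (Fin d)) {u v : V}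
    (h : G.ReachIn S u v) : G.ReachIn S v u := by
  induction h with
  | refl => exact .refl
  | tail _ hstep ih =>
    obtain ⟨i, hi, rfl⟩ := hstep
    exact ih.head ⟨i, hi, G.invol i _⟩

theorem reachIn_equivalence (G : EdgeColoredGraph V d) (S : Set (Fin d)) :
    Equivalence (G.ReachIn S) :=
  ⟨fun _ => Relation.ReflTransGen.refl, G.reachIn_symm S, Relation.ReflTransGen.trans⟩

def compSetoid (G : EdgeColoredGraph V (d + 1)) : Setoid V :=
  ⟨G.ReachIn {i | i ≠ Fin.last d}, G.reachIn_equivalence _⟩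

def compClass (G : EdgeColoredGraph V (d + 1)) (u : V) : Quotient G.compSetoid :=
  Quotient.mk _ u

theorem compClass_eq_compClass_iff (G : EdgeColoredGraph V (d + 1)) {u v : V} :
    G.compClass u = G.compClass v ↔ G.ReachIn {i | i ≠ Fin.last d} v u :=
  Quotient.eq.trans ⟨G.reachIn_symm _, G.reachIn_symm _⟩

section Components

variable [DecidableEq V] (G : EdgeColoredGraph V (d + 1)) [DecidableEq (Quotient G.compSetoid)]
  (U : Finset V)

def compCard (q : Quotient G.compSetoid) : ℕ := #{u ∈ U | G.compClass u = q}

def compMatched (q : Quotient G.compSetoid) : ℕ :=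
  #{u ∈ U | G.m (Fin.last d) u ∈ U ∧ G.compClass u = q}

def compBoundary (q : Quotient G.compSetoid) : ℕ :=
  ∑ i : Fin d, #{u ∈ U | G.m i.castSucc u ∉ U ∧ G.compClass u = q}

theorem card_filter_comp (v : V) [Fintype (G.comp v)] :
    #{u : G.comp v | u.1 ∈ U} = G.compCard U (G.compClass v) := by
  refine card_nbij Subtype.val (fun u hu => ?_) Subtype.val_injective.injOn fun u hu => ?_
  · simp only [coe_filter, mem_univ, true_and, Set.mem_ofPred_eq] at hu ⊢
    exact ⟨hu, (G.compClass_eq_compClass_iff).2 u.2⟩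
  · simp only [coe_filter] at hu
    refine ⟨⟨u, (G.compClass_eq_compClass_iff).1 hu.2⟩, ?_, rfl⟩
    simp only [coe_filter, mem_univ, true_and]
    exact hu.1

theorem boundary_restrict_filter (v : V) [Fintype (G.comp v)] [DecidableEq (G.comp v)] :
    (G.restrict v).boundary {u : G.comp v | u.1 ∈ U} = G.compBoundary U (G.compClass v) := by
  refine sum_congr rfl fun i _ => card_nbij Subtype.val (fun u hu => ?_)
    Subtype.val_injective.injOn fun u hu => ?_
  · simp only [coe_filter, mem_filter, mem_univ, true_and, Set.mem_ofPred_eq] at hu ⊢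
    exact ⟨hu.1, hu.2, (G.compClass_eq_compClass_iff).2 u.2⟩
  · simp only [coe_filter] at hu
    refine ⟨⟨u, (G.compClass_eq_compClass_iff).1 hu.2.2⟩, ?_, rfl⟩
    simp only [coe_filter, mem_filter, mem_univ, true_and]
    exact ⟨hu.1, hu.2.1⟩

theorem boundary_add_sum_compMatched [Fintype V] :
    G.boundary U + ∑ q ∈ U.image G.compClass, G.compMatched U q
      = ∑ q ∈ U.image G.compClass, G.compBoundary U q + #U := by
  have hfib : ∀ (p : V → Prop) [DecidablePred p],
      #{u ∈ U | p u} = ∑ q ∈ U.image G.compClass, #{u ∈ U | p u ∧ G.compClass u = q} :=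
    fun p _ => card_filter_eq_sum_card_filter_fiber fun u hu _ => mem_image_of_mem _ hu
  have hlower : ∑ q ∈ U.image G.compClass, G.compBoundary U q
      = ∑ i : Fin d, #{u ∈ U | G.m i.castSucc u ∉ U} := by
    simp only [compBoundary]
    rw [sum_comm]
    exact sum_congr rfl fun i _ => (hfib _).symm
  have htop : ∑ q ∈ U.image G.compClass, G.compMatched U q
      = #{u ∈ U | G.m (Fin.last d) u ∈ U} := (hfib _).symm
  have hsplit : #{u ∈ U | G.m (Fin.last d) u ∈ U} + #{u ∈ U | G.m (Fin.last d) u ∉ U} = #U :=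
    card_filter_add_card_filter_not _
  rw [boundary, Fin.sum_univ_castSucc, hlower, htop]
  omega

theorem sum_compMatched_filter (P : Quotient G.compSetoid → Prop) [DecidablePred P] :
    ∑ q ∈ U.image G.compClass with P q, G.compMatched U q
      = #{u ∈ U | G.m (Fin.last d) u ∈ U ∧ P (G.compClass u)} := by
  rw [card_filter_eq_sum_card_filter_fiber (t := (U.image G.compClass).filter P)
    fun u hu h => mem_filter.2 ⟨mem_image_of_mem _ hu, h.2⟩]
  refine sum_congr rfl fun q hq => congrArg card (filter_congr fun u _ => ?_)
  have := (mem_filter.1 hq).2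
  constructor
  · rintro ⟨hu, rfl⟩
    exact ⟨⟨hu, this⟩, rfl⟩
  · rintro ⟨⟨hu, -⟩, rfl⟩
    exact ⟨hu, rfl⟩

/-- Top-colour edges between two components with property `P` are counted by ordered pairs of
distinct such components (no loops, no parallel edges after contraction); those leaving towards
a component without `P` are counted at their other endpoint. -/
theorem sum_compMatched_le
    (hloop : ∀ v, ¬ G.ReachIn {i | i ≠ Fin.last d} v (G.m (Fin.last d) v))
    (hsimple : ∀ a b, G.ReachIn {i | i ≠ Fin.last d} a b →
      G.ReachIn {i | i ≠ Fin.last d} (G.m (Fin.last d) a) (G.m (Fin.last d) b) → a = b)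
    (P : Quotient G.compSetoid → Prop) [DecidablePred P] :
    ∑ q ∈ U.image G.compClass with P q, G.compMatched U q
      ≤ #{q ∈ U.image G.compClass | P q}.offDiag
        + ∑ q ∈ U.image G.compClass with ¬ P q, G.compMatched U q := by
  rw [sum_compMatched_filter, sum_compMatched_filter]
  set top := G.m (Fin.last d)
  set W := U.filter fun u => top u ∈ U ∧ P (G.compClass u)
  have hW : #(W.filter fun u => P (G.compClass (top u)))
      + #(W.filter fun u => ¬ P (G.compClass (top u))) = #W :=
    card_filter_add_card_filter_not _
  have hinner : #(W.filter fun u => P (G.compClass (top u)))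
      ≤ #{q ∈ U.image G.compClass | P q}.offDiag := by
    refine card_le_card_of_injOn (fun u => (G.compClass u, G.compClass (top u))) ?_ ?_
    · intro u hu
      simp only [W, coe_filter, Set.mem_ofPred_eq, mem_filter] at hu
      simp only [coe_offDiag, Set.mem_offDiag, coe_filter, mem_image]
      exact ⟨⟨⟨u, hu.1.1, rfl⟩, hu.1.2.2⟩, ⟨⟨top u, hu.1.2.1, rfl⟩, hu.2⟩,
        fun h => hloop u ((G.compClass_eq_compClass_iff).1 h.symm)⟩
    · rintro a - b - hab
      obtain ⟨h1, h2⟩ := Prod.mk.inj hab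
      exact (hsimple b a ((G.compClass_eq_compClass_iff).1 h1)
        ((G.compClass_eq_compClass_iff).1 h2)).symm
  have houter : #(W.filter fun u => ¬ P (G.compClass (top u)))
      ≤ #{u ∈ U | top u ∈ U ∧ ¬ P (G.compClass u)} := by
    refine card_le_card_of_injOn top ?_ ?_
    · intro u hu
      simp only [W, coe_filter, Set.mem_ofPred_eq, mem_filter] at hu
      exact mem_coe.2 (mem_filter.2 ⟨hu.1.2.1, by simpa [top, G.invol] using hu.1.1, hu.2⟩)
    · intro a _ b _ hab
      simpa [top, G.invol] using congrArg top hab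
  omega

end Components

theorem boundary_singleton [Fintype V] [DecidableEq V] (G : EdgeColoredGraph V d) (u : V) :
    G.boundary {u} = d := by
  simp [boundary, filter_singleton, G.ne]

theorem card_mul_sub_isoDeficit_le_boundary_of_card_le_one [Fintype V] [DecidableEq V]
    (G : EdgeColoredGraph V d) {U : Finset V} (hU : #U ≤ 1) :
    (#U : ℝ) * (d - isoDeficit #U) ≤ G.boundary U := by
  rw [isoDeficit, if_pos hU, sub_zero]
  rcases Nat.le_one_iff_eq_zero_or_eq_one.1 hU with hU | hU
  · simp [hU]
  · obtain ⟨u, rfl⟩ := card_eq_one.1 hU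
    simp [boundary_singleton]

theorem card_mul_sub_isoDeficit_le_boundary_succ [Fintype V] [DecidableEq V]
    (G : EdgeColoredGraph V (d + 1))
    (hloop : ∀ v, ¬ G.ReachIn {i | i ≠ Fin.last d} v (G.m (Fin.last d) v))
    (hsimple : ∀ a b, G.ReachIn {i | i ≠ Fin.last d} a b →
      G.ReachIn {i | i ≠ Fin.last d} (G.m (Fin.last d) a) (G.m (Fin.last d) b) → a = b)
    (hcomp : ∀ v [Fintype (G.comp v)] [DecidableEq (G.comp v)] (A : Finset (G.comp v)),
      (#A : ℝ) * (d - isoDeficit #A) ≤ (G.restrict v).boundary A)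
    {U : Finset V} (hU : 2 ≤ #U) :
    (#U : ℝ) * ((d + 1 : ℕ) - isoDeficit #U) ≤ G.boundary U := by
  classical
  set C := U.image G.compClass
  have hsum : ∑ q ∈ C, G.compCard U q = #U := (card_eq_sum_card_image _ _).symm
  have hs : ∀ q ∈ C, 1 ≤ G.compCard U q := fun q hq => by
    obtain ⟨v, hv, rfl⟩ := mem_image.1 hq
    exact card_pos.2 ⟨v, mem_filter.2 ⟨hv, rfl⟩⟩
  have hm : ∀ q ∈ C, G.compMatched U q ≤ G.compCard U q := fun q _ =>
    card_le_card fun u hu => by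
      rw [mem_filter] at hu ⊢
      exact ⟨hu.1, hu.2.2⟩
  have hb : ∀ q ∈ C, (G.compCard U q : ℝ) * (d - isoDeficit (G.compCard U q))
      ≤ G.compBoundary U q := fun q hq => by
    obtain ⟨v, -, rfl⟩ := mem_image.1 hq
    have : Fintype (G.comp v) := Subtype.fintype _
    simpa only [card_filter_comp, boundary_restrict_filter] using hcomp v {u : G.comp v | u.1 ∈ U}
  have hstep := isoDeficit_induction_step C _ _ _ hsum hU hs hm hb
    (G.sum_compMatched_le U hloop hsimple _)
  have hid : (G.boundary U : ℝ) + ∑ q ∈ C, (G.compMatched U q : ℝ)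
      = ∑ q ∈ C, (G.compBoundary U q : ℝ) + #U := by
    exact_mod_cast G.boundary_add_sum_compMatched U
  push_cast
  linarith

theorem IsWeaklyDualSystolic.card_mul_sub_isoDeficit_le_boundary :
    ∀ {d : ℕ} {V : Type} [Fintype V] [DecidableEq V] {G : EdgeColoredGraph V d},
      G.IsWeaklyDualSystolic → ∀ U : Finset V, (#U : ℝ) * (d - isoDeficit #U) ≤ G.boundary U
  | 0, _, _, _, G, _, U => by
    have := isoDeficit_nonneg #U
    simp only [CharP.cast_eq_zero, zero_sub, mul_neg]
    linarith [mul_nonneg (Nat.cast_nonneg #U) this, Nat.cast_nonneg (α := ℝ) (G.boundary U)]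
  | _ + 1, _, _, _, G, hG, U => by
    rcases le_or_gt #U 1 with hU | hU
    · exact G.card_mul_sub_isoDeficit_le_boundary_of_card_le_one hU
    · exact G.card_mul_sub_isoDeficit_le_boundary_succ hG.1.1 hG.2.1
        (fun v _ _ A => card_mul_sub_isoDeficit_le_boundary (hG.2.2 v) A) hU

end EdgeColoredGraph

/-- Let `G` be a `d`-dimensional weakly dual systolic graph and `U` a set of
`s > 1` vertices.  Then `φ_G(U) = ∂(U)/|U| ≥ d − 8(1 + log₂ log₂ s)`. -/
theorem weaklyDualSystolic_isoperimetry {V : Type} [Fintype V] [DecidableEq V] {d : ℕ}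
    (G : EdgeColoredGraph V d) (hG : G.IsWeaklyDualSystolic)
    (U : Finset V) (hU : 1 < U.card) :
    (G.boundary U : ℝ) / U.card
      ≥ d - 8 * (1 + Real.logb 2 (Real.logb 2 U.card)) := by
  have h := hG.card_mul_sub_isoDeficit_le_boundary U
  rw [isoDeficit_of_two_le hU] at h
  rw [ge_iff_le, le_div_iff₀ (by positivity)]
  linarith
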